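/- Let L > 0 and κ ≥ 1. There exists a constant C₁ > 0, depending only on L and κ, with the following property: for every partition a = z_0 < z_1 < … < z_n = b of an interval [a,b] of length b − a = L whose element lengths h_j := z_j − z_{j−1} satisfy max(h_{j+1}/h_j, h_j/h_{j+1}) ≤ κ for all 1 ≤ j ≤ n−1, and for every u ∈ L²([a,b]), it holds ‖u‖²_{H^{1/2}([a,b])} ≤ Σ_{j=0}^{n} |u|²_{H^{1/2}(ω_j)} + C₁ Σ_{j=1}^{n} h_j^{−1} ‖u‖²_{L²([z_{j−1}, z_j])}, where ω_0 := [z_0, z_1], ω_j := [z_{j−1}, z_{j+1}] for 1 ≤ j ≤ n−1, and ω_n := [z_{n−1}, z_n]. -/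

import Mathlib

open Set MeasureTheory

/-- Squared Sobolev–Slobodeckij seminorm `|u|_{H^{1/2}(s)}²`. -/
noncomputable def sobSemiSq (u : ℝ → ℝ) (s : Set ℝ) : ENNReal :=
  ∫⁻ x in s, ∫⁻ y in s, ENNReal.ofReal ((u x - u y) ^ 2 / (x - y) ^ 2)

/-- Squared `L²` norm `‖u‖_{L²(s)}²`. -/
noncomputable def l2Sq (u : ℝ → ℝ) (s : Set ℝ) : ENNReal :=
  ∫⁻ x in s, ENNReal.ofReal ((u x) ^ 2)

/-- Squared Sobolev–Slobodeckij norm `‖u‖_{H^{1/2}(s)}²`. -/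
noncomputable def h12Sq (u : ℝ → ℝ) (s : Set ℝ) : ENNReal :=
  l2Sq u s + sobSemiSq u s

open Filter Topology
open scoped ENNReal

/-!
Cover `[a, b]²` by the squares `ω_j × ω_j` and the remaining far set `F`. If `(x, y) ∈ F` and `x`
lies in the element `[z_{k-1}, z_k]`, then `y` lies beyond a neighbouring element, so
`|x - y| ≥ h_k / κ`. With `(u x - u y)² ≤ 2 u(x)² + 2 u(y)²` and the symmetry of `F`, the far part
is at most `4 ∫_F u(x)² / (x - y)²`, and `∫_{|y - x| ≥ d} (y - x)⁻² dy = 2 / d` turns this into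
`8κ Σ_k h_k⁻¹ ‖u‖²_{L²(z_{k-1}, z_k)}`. The `L²` norm itself costs the factor `L ≥ h_k`.
-/

lemma lintegral_biUnion_finset_le {α ι : Type*} [MeasurableSpace α] {μ : Measure α}
    (s : Finset ι) (t : ι → Set α) (f : α → ℝ≥0∞) :
    ∫⁻ a in ⋃ i ∈ s, t i, f a ∂μ ≤ ∑ i ∈ s, ∫⁻ a in t i, f a ∂μ := by
  rw [← s.tsum_subtype, ← Finset.set_biUnion_coe, biUnion_eq_iUnion]
  exact lintegral_iUnion_le _ _

lemma lintegral_Ici_inv_sq_sub (x : ℝ) {d : ℝ} (hd : 0 < d) :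
    ∫⁻ y in Ici (x + d), ENNReal.ofReal (((y - x) ^ 2)⁻¹) = ENNReal.ofReal d⁻¹ := by
  have hderiv : ∀ y ∈ Ici (x + d), HasDerivAt (fun y => -(y - x)⁻¹) ((y - x) ^ 2)⁻¹ y := by
    intro y hy
    have hne : y - x ≠ 0 := by rw [mem_Ici] at hy; linarith
    have h := (((hasDerivAt_id' y).sub_const x).inv hne).neg
    rwa [neg_div, neg_neg, one_div] at h
  have hnonneg : ∀ y ∈ Ioi (x + d), 0 ≤ ((y - x) ^ 2)⁻¹ := fun _ _ => by positivity
  have hlim : Tendsto (fun y => -(y - x)⁻¹) atTop (𝓝 0) := by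
    simpa [sub_eq_add_neg] using
      (tendsto_inv_atTop_zero.comp (tendsto_atTop_add_const_right _ (-x) tendsto_id)).neg
  rw [← setLIntegral_congr Ioi_ae_eq_Ici, ← ofReal_integral_eq_lintegral_ofReal
    (integrableOn_Ioi_deriv_of_nonneg' hderiv hnonneg hlim) (ae_of_all _ fun _ => by positivity),
    integral_Ioi_of_hasDerivAt_of_nonneg' hderiv hnonneg hlim]
  simp

lemma lintegral_Iic_inv_sq_sub (x : ℝ) {d : ℝ} (hd : 0 < d) :
    ∫⁻ y in Iic (x - d), ENNReal.ofReal (((y - x) ^ 2)⁻¹) = ENNReal.ofReal d⁻¹ := by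
  have hpre : Neg.neg ⁻¹' Iic (x - d) = Ici (-x + d) := by
    ext y; simp only [mem_preimage, mem_Iic, mem_Ici]; constructor <;> intro <;> linarith
  rw [← (Measure.measurePreserving_neg volume).setLIntegral_comp_preimage_emb
    (Homeomorph.neg ℝ).measurableEmbedding, hpre, ← lintegral_Ici_inv_sq_sub (-x) hd]
  congr! 3 with y
  ring

lemma lintegral_inv_sq_sub_le (x : ℝ) {d : ℝ} (hd : 0 < d) :
    ∫⁻ y in {y | d ≤ |y - x|}, ENNReal.ofReal (((y - x) ^ 2)⁻¹) ≤ ENNReal.ofReal (2 / d) := by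
  have hcover : {y | d ≤ |y - x|} ⊆ Iic (x - d) ∪ Ici (x + d) := by
    intro y hy
    rcases le_abs'.mp (show d ≤ |y - x| from hy) with h | h
    · left; rw [mem_Iic]; linarith
    · right; rw [mem_Ici]; linarith
  calc _ ≤ _ := lintegral_mono_set hcover
    _ ≤ _ := lintegral_union_le _ _ _
    _ = ENNReal.ofReal (2 / d) := by
      rw [lintegral_Iic_inv_sq_sub x hd, lintegral_Ici_inv_sq_sub x hd,
        ← ENNReal.ofReal_add (by positivity) (by positivity)]
      ring_nf

noncomputable def sobKernel (u : ℝ → ℝ) (p : ℝ × ℝ) : ℝ≥0∞ :=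
  ENNReal.ofReal ((u p.1 - u p.2) ^ 2 / (p.1 - p.2) ^ 2)

noncomputable def weightKernel (u : ℝ → ℝ) (p : ℝ × ℝ) : ℝ≥0∞ :=
  ENNReal.ofReal (u p.1 ^ 2) * ENNReal.ofReal (((p.2 - p.1) ^ 2)⁻¹)

lemma sobSemiSq_eq_setLIntegral_prod {u : ℝ → ℝ} (hu : Measurable u) (s : Set ℝ) :
    sobSemiSq u s = ∫⁻ p in s ×ˢ s, sobKernel u p := by
  have hK : Measurable (sobKernel u) := by unfold sobKernel; fun_prop
  rw [Measure.volume_eq_prod, setLIntegral_prod _ hK.aemeasurable]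
  rfl

lemma sobKernel_le (u : ℝ → ℝ) (p : ℝ × ℝ) :
    sobKernel u p ≤ 2 * weightKernel u p + 2 * weightKernel u p.swap := by
  obtain ⟨x, y⟩ := p
  have hsq : (y - x) ^ 2 = (x - y) ^ 2 := by ring
  have hk : 0 ≤ ((x - y) ^ 2)⁻¹ := by positivity
  calc sobKernel u (x, y)
      ≤ ENNReal.ofReal (2 * (u x ^ 2 * ((y - x) ^ 2)⁻¹) + 2 * (u y ^ 2 * ((x - y) ^ 2)⁻¹)) := by
        refine ENNReal.ofReal_le_ofReal ?_
        rw [hsq, div_eq_mul_inv]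
        nlinarith [mul_nonneg (sq_nonneg (u x + u y)) hk]
    _ = 2 * weightKernel u (x, y) + 2 * weightKernel u (x, y).swap := by
        simp only [weightKernel, Prod.swap]
        rw [ENNReal.ofReal_add (by positivity) (by positivity), ENNReal.ofReal_mul zero_le_two,
          ENNReal.ofReal_mul zero_le_two, ENNReal.ofReal_mul (sq_nonneg _),
          ENNReal.ofReal_mul (sq_nonneg _), ENNReal.ofReal_ofNat]

lemma setLIntegral_sobKernel_le {u : ℝ → ℝ} (hu : Measurable u) {F : Set (ℝ × ℝ)}
    (hF : Prod.swap ⁻¹' F = F) :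
    ∫⁻ p in F, sobKernel u p ≤ 4 * ∫⁻ p in F, weightKernel u p := by
  have hswap : ∫⁻ p in F, weightKernel u p.swap = ∫⁻ p in F, weightKernel u p := by
    conv_lhs => rw [← hF]
    exact Measure.measurePreserving_swap.setLIntegral_comp_preimage_emb
      MeasurableEquiv.prodComm.measurableEmbedding _ _
  have hmeas : Measurable (weightKernel u) := by unfold weightKernel; fun_prop
  calc ∫⁻ p in F, sobKernel u p
      ≤ ∫⁻ p in F, (2 * weightKernel u p + 2 * weightKernel u p.swap) :=
        lintegral_mono (sobKernel_le u)
    _ = 2 * (∫⁻ p in F, weightKernel u p) + 2 * ∫⁻ p in F, weightKernel u p.swap := by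
        rw [lintegral_add_left (hmeas.const_mul 2), lintegral_const_mul' _ _ ENNReal.ofNat_ne_top,
          lintegral_const_mul' _ _ ENNReal.ofNat_ne_top]
    _ = 4 * ∫⁻ p in F, weightKernel u p := by
        rw [hswap]; ring

lemma setLIntegral_weightKernel_le (u : ℝ → ℝ) {A : Set ℝ} (hA : MeasurableSet A) {d : ℝ}
    (hd : 0 < d) :
    ∫⁻ p in {p : ℝ × ℝ | p.1 ∈ A ∧ d ≤ |p.2 - p.1|}, weightKernel u p
      ≤ ENNReal.ofReal (2 / d) * l2Sq u A := by
  set T := {p : ℝ × ℝ | p.1 ∈ A ∧ d ≤ |p.2 - p.1|}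
  have hT : MeasurableSet T :=
    (measurable_fst hA).inter (measurableSet_le (f := fun _ => d) measurable_const (by fun_prop))
  have hfar : ∀ x, MeasurableSet {y : ℝ | d ≤ |y - x|} := fun x =>
    measurableSet_le (f := fun _ => d) measurable_const (by fun_prop)
  have hslice : ∀ x, ∫⁻ y, T.indicator (weightKernel u) (x, y)
      ≤ A.indicator (fun x => ENNReal.ofReal (u x ^ 2) * ENNReal.ofReal (2 / d)) x := by
    intro x
    by_cases hx : x ∈ A
    · have hT_x : (fun y => T.indicator (weightKernel u) (x, y)) = {y | d ≤ |y - x|}.indicator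
          (fun y => ENNReal.ofReal (u x ^ 2) * ENNReal.ofReal (((y - x) ^ 2)⁻¹)) := by
        ext y; simp [T, indicator, hx, weightKernel]
      rw [hT_x, lintegral_indicator (hfar x), lintegral_const_mul' _ _ ENNReal.ofReal_ne_top,
        indicator_of_mem hx]
      gcongr
      exact lintegral_inv_sq_sub_le x hd
    · simp [T, hx]
  calc ∫⁻ p in T, weightKernel u p
      = ∫⁻ p, T.indicator (weightKernel u) p := (lintegral_indicator hT _).symm
    _ ≤ ∫⁻ x, ∫⁻ y, T.indicator (weightKernel u) (x, y) := lintegral_prod_le _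
    _ ≤ ∫⁻ x, A.indicator (fun x => ENNReal.ofReal (u x ^ 2) * ENNReal.ofReal (2 / d)) x :=
        lintegral_mono hslice
    _ = ENNReal.ofReal (2 / d) * l2Sq u A := by
        rw [lintegral_indicator hA, lintegral_mul_const' _ _ ENNReal.ofReal_ne_top, mul_comm]
        rfl

/-- Truncated subtraction and `min` make `patch z n 0 = [z₀, z₁]` and
`patch z n n = [zₙ₋₁, zₙ]`. -/
def patch (z : ℕ → ℝ) (n j : ℕ) : Set ℝ := Icc (z (j - 1)) (z (min (j + 1) n))

def farSet (z : ℕ → ℝ) (n : ℕ) : Set (ℝ × ℝ) :=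
  Icc (z 0) (z n) ×ˢ Icc (z 0) (z n) \ ⋃ j ∈ Finset.range (n + 1), patch z n j ×ˢ patch z n j

def IsLocallyQuasiUniform (κ : ℝ) (z : ℕ → ℝ) (n : ℕ) : Prop :=
  ∀ j, 1 ≤ j → j < n →
    (z (j + 1) - z j) / (z j - z (j - 1)) ≤ κ ∧ (z j - z (j - 1)) / (z (j + 1) - z j) ≤ κ

noncomputable def weightedL2Sq (z : ℕ → ℝ) (n : ℕ) (u : ℝ → ℝ) : ℝ≥0∞ :=
  ∑ k ∈ Finset.Icc 1 n, ENNReal.ofReal ((z k - z (k - 1))⁻¹) * l2Sq u (Icc (z (k - 1)) (z k))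

lemma preimage_swap_farSet (z : ℕ → ℝ) (n : ℕ) : Prod.swap ⁻¹' farSet z n = farSet z n := by
  simp only [farSet, preimage_sdiff, preimage_iUnion₂, preimage_swap_prod]

lemma Icc_subset_biUnion_Icc (z : ℕ → ℝ) {n : ℕ} (hn : 1 ≤ n) :
    Icc (z 0) (z n) ⊆ ⋃ k ∈ Finset.Icc 1 n, Icc (z (k - 1)) (z k) := by
  induction n, hn using Nat.le_induction with
  | base => simp
  | succ n hn ih =>
    refine Icc_subset_Icc_union_Icc.trans (union_subset (ih.trans ?_) ?_)
    · exact biUnion_subset_biUnion_left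
        (Finset.coe_subset.2 (Finset.Icc_subset_Icc_right (by omega)))
    · exact subset_iUnion₂_of_subset (n + 1) (by simp) subset_rfl

lemma setLIntegral_sobKernel_le_patches_add_far (u : ℝ → ℝ) (z : ℕ → ℝ) (n : ℕ) :
    ∫⁻ p in Icc (z 0) (z n) ×ˢ Icc (z 0) (z n), sobKernel u p
      ≤ ∑ j ∈ Finset.range (n + 1), (∫⁻ p in patch z n j ×ˢ patch z n j, sobKernel u p)
        + ∫⁻ p in farSet z n, sobKernel u p :=
  calc _ ≤ ∫⁻ p in farSet z n ∪ ⋃ j ∈ Finset.range (n + 1), patch z n j ×ˢ patch z n j,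
          sobKernel u p := lintegral_mono_set (subset_sdiff_union _ _)
    _ ≤ _ := lintegral_union_le _ _ _
    _ ≤ _ := by rw [add_comm]; gcongr; exact lintegral_biUnion_finset_le _ _ _

lemma l2Sq_congr_ae {u v : ℝ → ℝ} {s t : Set ℝ} (h : u =ᵐ[volume.restrict s] v) (ht : t ⊆ s) :
    l2Sq u t = l2Sq v t :=
  lintegral_congr_ae <|
    (ae_restrict_of_ae_restrict_of_subset ht h).mono fun x hx => by simp only [hx]

lemma sobSemiSq_congr_ae {u v : ℝ → ℝ} {s t : Set ℝ} (h : u =ᵐ[volume.restrict s] v)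
    (ht : t ⊆ s) : sobSemiSq u t = sobSemiSq v t := by
  have h' := ae_restrict_of_ae_restrict_of_subset ht h
  exact lintegral_congr_ae <| h'.mono fun x hx =>
    lintegral_congr_ae <| h'.mono fun y hy => by simp only [hx, hy]

section Mesh

variable {κ : ℝ} {n : ℕ} {z : ℕ → ℝ}

lemma le_of_forall_lt_succ (hinc : ∀ j < n, z j < z (j + 1)) {i j : ℕ} (hij : i ≤ j)
    (hj : j ≤ n) : z i ≤ z j :=
  (strictMonoOn_Iic_of_lt_succ hinc).monotoneOn (mem_Iic.2 (hij.trans hj)) (mem_Iic.2 hj) hij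

lemma sub_pred_pos (hinc : ∀ j < n, z j < z (j + 1)) {k : ℕ} (hk1 : 1 ≤ k) (hkn : k ≤ n) :
    0 < z k - z (k - 1) := by
  have h := hinc (k - 1) (by omega)
  rw [Nat.sub_add_cancel hk1] at h
  exact sub_pos.2 h

lemma div_le_next_gap (hκ : 0 < κ) (hinc : ∀ j < n, z j < z (j + 1))
    (hmesh : IsLocallyQuasiUniform κ z n) {k : ℕ} (hk1 : 1 ≤ k) (hkn : k < n) :
    (z k - z (k - 1)) / κ ≤ z (k + 1) - z k :=
  (div_le_comm₀ (sub_pos.2 (hinc k hkn)) hκ).1 (hmesh k hk1 hkn).2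

lemma div_le_prev_gap (hκ : 0 < κ) (hinc : ∀ j < n, z j < z (j + 1))
    (hmesh : IsLocallyQuasiUniform κ z n) {k : ℕ} (hk2 : 2 ≤ k) (hkn : k ≤ n) :
    (z k - z (k - 1)) / κ ≤ z (k - 1) - z (k - 2) := by
  have h := (hmesh (k - 1) (by omega) (by omega)).1
  rw [Nat.sub_add_cancel (by omega : 1 ≤ k), Nat.sub_sub] at h
  exact (div_le_comm₀ (sub_pred_pos hinc (by omega) (by omega)) hκ).1 h

lemma div_le_abs_sub_of_mem_farSet (hκ : 0 < κ) (hinc : ∀ j < n, z j < z (j + 1))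
    (hmesh : IsLocallyQuasiUniform κ z n) {p : ℝ × ℝ} (hp : p ∈ farSet z n) {k : ℕ}
    (hk : k ∈ Finset.Icc 1 n)
    (hx : p.1 ∈ Icc (z (k - 1)) (z k)) :
    (z k - z (k - 1)) / κ ≤ |p.2 - p.1| := by
  obtain ⟨hk1, hkn⟩ := Finset.mem_Icc.1 hk
  have hfar : ∀ j ≤ n, p.1 ∈ patch z n j → p.2 ∉ patch z n j := fun j hj h1 h2 =>
    hp.2 (mem_iUnion₂_of_mem (Finset.mem_range.2 (Nat.lt_succ_of_le hj)) ⟨h1, h2⟩)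
  have hy : p.2 ∈ Icc (z 0) (z n) := hp.1.2
  have hyk := hfar k hkn ⟨hx.1, hx.2.trans (le_of_forall_lt_succ hinc (by omega) (by omega))⟩
  simp only [patch, mem_Icc, not_and_or, not_le] at hyk
  rcases hyk with hleft | hright
  · have hk2 : 2 ≤ k := by
      by_contra h
      rw [show k = 1 by omega] at hleft
      exact hleft.not_ge hy.1
    have hyk' := hfar (k - 1) (by omega)
      ⟨(le_of_forall_lt_succ hinc (by omega) (by omega)).trans hx.1,
        by rw [show min (k - 1 + 1) n = k by omega]; exact hx.2⟩
    simp only [patch, mem_Icc, not_and_or, not_le, show min (k - 1 + 1) n = k by omega,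
      Nat.sub_sub] at hyk'
    have hgap := div_le_prev_gap hκ hinc hmesh hk2 hkn
    rcases hyk' with h | h
    · rw [abs_sub_comm]; exact le_abs.2 (Or.inl (by linarith [hx.1]))
    · linarith [le_of_forall_lt_succ hinc (by omega : k - 1 ≤ k) hkn]
  · have hlt : k < n := by
      by_contra h
      rw [min_eq_right (by omega)] at hright
      exact hright.not_ge hy.2
    rw [min_eq_left hlt] at hright
    have hgap := div_le_next_gap hκ hinc hmesh hk1 hlt
    exact le_abs.2 (Or.inl (by linarith [hx.2]))

lemma setLIntegral_weightKernel_farSet_le (u : ℝ → ℝ) (hκ : 0 < κ)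
    (hinc : ∀ j < n, z j < z (j + 1)) (hmesh : IsLocallyQuasiUniform κ z n) (hn : 1 ≤ n) :
    ∫⁻ p in farSet z n, weightKernel u p ≤ ENNReal.ofReal (2 * κ) * weightedL2Sq z n u := by
  have hcover : farSet z n ⊆ ⋃ k ∈ Finset.Icc 1 n,
      {p : ℝ × ℝ | p.1 ∈ Icc (z (k - 1)) (z k) ∧ (z k - z (k - 1)) / κ ≤ |p.2 - p.1|} := by
    intro p hp
    obtain ⟨k, hk, hx⟩ := mem_iUnion₂.1 (Icc_subset_biUnion_Icc z hn hp.1.1)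
    exact mem_iUnion₂_of_mem hk ⟨hx, div_le_abs_sub_of_mem_farSet hκ hinc hmesh hp hk hx⟩
  calc _ ≤ _ := lintegral_mono_set hcover
    _ ≤ _ := lintegral_biUnion_finset_le _ _ _
    _ ≤ ∑ k ∈ Finset.Icc 1 n, ENNReal.ofReal (2 / ((z k - z (k - 1)) / κ)) *
          l2Sq u (Icc (z (k - 1)) (z k)) := by
        gcongr with k hk
        obtain ⟨hk1, hkn⟩ := Finset.mem_Icc.1 hk
        exact setLIntegral_weightKernel_le u measurableSet_Icc
          (div_pos (sub_pred_pos hinc hk1 hkn) hκ)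
    _ = ENNReal.ofReal (2 * κ) * weightedL2Sq z n u := by
        rw [weightedL2Sq, Finset.mul_sum]
        refine Finset.sum_congr rfl fun k _ => ?_
        rw [← mul_assoc, ← ENNReal.ofReal_mul (by positivity), div_div_eq_mul_div,
          div_eq_mul_inv]

lemma l2Sq_le_mul_weightedL2Sq (u : ℝ → ℝ) (hinc : ∀ j < n, z j < z (j + 1)) (hn : 1 ≤ n) :
    l2Sq u (Icc (z 0) (z n)) ≤ ENNReal.ofReal (z n - z 0) * weightedL2Sq z n u := by
  calc l2Sq u (Icc (z 0) (z n)) ≤ ∑ k ∈ Finset.Icc 1 n, l2Sq u (Icc (z (k - 1)) (z k)) :=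
        (lintegral_mono_set (Icc_subset_biUnion_Icc z hn)).trans
          (lintegral_biUnion_finset_le _ _ _)
    _ ≤ ∑ k ∈ Finset.Icc 1 n, ENNReal.ofReal (z n - z 0) *
          (ENNReal.ofReal ((z k - z (k - 1))⁻¹) * l2Sq u (Icc (z (k - 1)) (z k))) := by
        gcongr with k hk
        obtain ⟨hk1, hkn⟩ := Finset.mem_Icc.1 hk
        have hlen : z k - z (k - 1) ≤ z n - z 0 := by
          linarith [le_of_forall_lt_succ hinc (Nat.zero_le (k - 1)) (by omega),
            le_of_forall_lt_succ hinc hkn le_rfl]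
        rw [← mul_assoc, ← ENNReal.ofReal_mul (by linarith [sub_pred_pos hinc hk1 hkn])]
        refine le_mul_of_one_le_left' (ENNReal.one_le_ofReal.2 ?_)
        rw [← div_eq_mul_inv]
        exact (one_le_div (sub_pred_pos hinc hk1 hkn)).2 hlen
    _ = ENNReal.ofReal (z n - z 0) * weightedL2Sq z n u := by rw [weightedL2Sq, Finset.mul_sum]

lemma sobSemiSq_le_patches_add_weightedL2Sq {u : ℝ → ℝ} (hu : Measurable u) (hκ : 0 < κ)
    (hinc : ∀ j < n, z j < z (j + 1)) (hmesh : IsLocallyQuasiUniform κ z n) (hn : 1 ≤ n) :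
    sobSemiSq u (Icc (z 0) (z n)) ≤ ∑ j ∈ Finset.range (n + 1), sobSemiSq u (patch z n j)
      + ENNReal.ofReal (8 * κ) * weightedL2Sq z n u := by
  simp only [sobSemiSq_eq_setLIntegral_prod hu]
  refine (setLIntegral_sobKernel_le_patches_add_far u z n).trans (add_le_add le_rfl ?_)
  calc ∫⁻ p in farSet z n, sobKernel u p ≤ 4 * ∫⁻ p in farSet z n, weightKernel u p :=
        setLIntegral_sobKernel_le hu (preimage_swap_farSet z n)
    _ ≤ 4 * (ENNReal.ofReal (2 * κ) * weightedL2Sq z n u) := by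
        gcongr; exact setLIntegral_weightKernel_farSet_le u hκ hinc hmesh hn
    _ = ENNReal.ofReal (8 * κ) * weightedL2Sq z n u := by
        rw [← mul_assoc, ← ENNReal.ofReal_ofNat 4, ← ENNReal.ofReal_mul (by norm_num)]
        ring_nf

lemma h12Sq_le_patches_add_weightedL2Sq_of_measurable {u : ℝ → ℝ} (hu : Measurable u)
    (hκ : 0 < κ) (hinc : ∀ j < n, z j < z (j + 1)) (hmesh : IsLocallyQuasiUniform κ z n)
    (hn : 1 ≤ n) :
    h12Sq u (Icc (z 0) (z n)) ≤ ∑ j ∈ Finset.range (n + 1), sobSemiSq u (patch z n j)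
      + ENNReal.ofReal (z n - z 0 + 8 * κ) * weightedL2Sq z n u := by
  rw [h12Sq, ENNReal.ofReal_add
    (sub_nonneg.2 (le_of_forall_lt_succ hinc (Nat.zero_le n) le_rfl)) (by positivity), add_mul]
  calc _ ≤ ENNReal.ofReal (z n - z 0) * weightedL2Sq z n u
        + (∑ j ∈ Finset.range (n + 1), sobSemiSq u (patch z n j)
          + ENNReal.ofReal (8 * κ) * weightedL2Sq z n u) :=
        add_le_add (l2Sq_le_mul_weightedL2Sq u hinc hn)
          (sobSemiSq_le_patches_add_weightedL2Sq hu hκ hinc hmesh hn)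
    _ = _ := by ring

lemma h12Sq_le_patches_add_weightedL2Sq {u : ℝ → ℝ}
    (hu : AEStronglyMeasurable u (volume.restrict (Icc (z 0) (z n)))) (hκ : 0 < κ)
    (hinc : ∀ j < n, z j < z (j + 1)) (hmesh : IsLocallyQuasiUniform κ z n) (hn : 1 ≤ n) :
    h12Sq u (Icc (z 0) (z n)) ≤ ∑ j ∈ Finset.range (n + 1), sobSemiSq u (patch z n j)
      + ENNReal.ofReal (z n - z 0 + 8 * κ) * weightedL2Sq z n u := by
  have hsub : ∀ i j, i ≤ n → j ≤ n → Icc (z i) (z j) ⊆ Icc (z 0) (z n) := fun i j hi hj =>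
    Icc_subset_Icc (le_of_forall_lt_succ hinc (Nat.zero_le i) hi)
      (le_of_forall_lt_succ hinc hj le_rfl)
  obtain ⟨v, hv, huv⟩ : ∃ v, Measurable v ∧ u =ᵐ[volume.restrict (Icc (z 0) (z n))] v :=
    ⟨_, hu.aemeasurable.measurable_mk, hu.aemeasurable.ae_eq_mk⟩
  have hpatches : ∀ j ∈ Finset.range (n + 1),
      sobSemiSq u (patch z n j) = sobSemiSq v (patch z n j) := fun j hj =>
    sobSemiSq_congr_ae huv (hsub _ _ (by rw [Finset.mem_range] at hj; omega) (min_le_right _ _))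
  have hweighted : weightedL2Sq z n u = weightedL2Sq z n v := Finset.sum_congr rfl fun k hk => by
    rw [Finset.mem_Icc] at hk
    rw [l2Sq_congr_ae huv (hsub _ _ (by omega) hk.2)]
  rw [h12Sq, l2Sq_congr_ae huv subset_rfl, sobSemiSq_congr_ae huv subset_rfl,
    Finset.sum_congr rfl hpatches, hweighted, ← h12Sq]
  exact h12Sq_le_patches_add_weightedL2Sq_of_measurable hv hκ hinc hmesh hn

end Mesh

/-- Lemma 3.3: the global `H^{1/2}`-norm is bounded by the sum of the local patch
seminorms plus weighted elementwise `L²`-contributions. -/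
theorem h12_le_patches_plus_weighted_l2
    (L : ℝ) (hL : 0 < L) (κ : ℝ) (hκ : 1 ≤ κ) :
    ∃ C₁ : ℝ, 0 < C₁ ∧
      ∀ (a b : ℝ) (n : ℕ) (z : ℕ → ℝ),
        b - a = L → 1 ≤ n → z 0 = a → z n = b →
        (∀ j < n, z j < z (j + 1)) →
        (∀ j, 1 ≤ j → j < n →
          (z (j + 1) - z j) / (z j - z (j - 1)) ≤ κ ∧
          (z j - z (j - 1)) / (z (j + 1) - z j) ≤ κ) →
        ∀ u : ℝ → ℝ, MemLp u 2 (volume.restrict (Icc a b)) →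
          h12Sq u (Icc a b)
            ≤ ∑ j ∈ Finset.range (n + 1),
                sobSemiSq u (Icc (z (j - 1)) (z (min (j + 1) n)))
              + ENNReal.ofReal C₁ * ∑ j ∈ Finset.Icc 1 n,
                  ENNReal.ofReal ((z j - z (j - 1))⁻¹) *
                    l2Sq u (Icc (z (j - 1)) (z j)) := by
  refine ⟨L + 8 * κ, by positivity, ?_⟩
  rintro a b n z rfl hn rfl rfl hinc hmesh u hu
  exact h12Sq_le_patches_add_weightedL2Sq hu.1 (by positivity) hinc hmesh hn
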